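/- Let p be an odd prime, f(z) = z^p + c ∈ ℤ[z] with c not a p-th power in ℤ and c > 0. Then f^n(z) is irreducible over ℚ(ζ_p) for all n ≥ 1. -/

import Mathlib

open Polynomial

/-- The polynomial giving the `n`-th iterate of `f(z) = z^d + c`. -/
noncomputable def iteratePoly (K : Type*) [Field K] (d : ℕ) (c : K) : ℕ → Polynomial K :=
  fun n => (fun q : Polynomial K => q.comp (X ^ d + C c))^[n] X

/-!
By Capelli's lemma, if `g` is monic irreducible with root `α`, then `g(X^p + c)` is irreducible
as soon as `X^p - (α - c)` is irreducible over `K(α)`, i.e. (for `p` prime) as soon as `α - c` is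
not a `p`-th power there. For odd `p` its norm `g(c)` would then be a `p`-th power in `K`.
For `g = f^n` we have `g(c) = f^(n+1)(0)`, which is `c` or lies strictly between `a^p` and
`(a+1)^p` with `a = f^n(0) ≥ c`; so it is not a `p`-th power in `ℤ`, hence not in `ℚ`
(`ℤ` is integrally closed) and not in `ℚ(ζ_p)`, whose degree `p - 1` is prime to `p`.
-/

open IntermediateField

theorem PowerBasis.norm_algebraMap_sub_gen {K S : Type*} [CommRing K] [CommRing S] [Algebra K S]
    (pb : PowerBasis K S) (c : K) :
    Algebra.norm K (algebraMap K S c - pb.gen) = (minpoly K pb.gen).eval c := by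
  rw [Algebra.norm_eq_matrix_det pb.basis, map_sub, AlgHom.commutes, ← charpoly_leftMulMatrix,
    Matrix.eval_charpoly, Matrix.algebraMap_eq_diagonal]
  rfl

theorem Polynomial.irreducible_comp_X_pow_add_C {K : Type*} [Field K] {p : ℕ} (hp : p.Prime)
    (hodd : Odd p) {g : K[X]} (hgm : g.Monic) (hg : Irreducible g) (c : K)
    (hgc : ∀ b : K, b ^ p ≠ g.eval c) :
    Irreducible (g.comp (X ^ p + C c)) := by
  refine irreducible_comp hgm (monic_X_pow_add_C c hp.ne_zero) hg fun E _ _ x hx => ?_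
  have hx_int : IsIntegral K x := by
    by_contra h
    exact hg.ne_zero (hx ▸ minpoly.eq_zero h)
  have hshift : (X ^ p + C c).map (algebraMap K K⟮x⟯) - C (AdjoinSimple.gen K x) =
      X ^ p - C (AdjoinSimple.gen K x - algebraMap K K⟮x⟯ c) := by
    simp only [Polynomial.map_add, Polynomial.map_pow, map_X, map_C, map_sub]
    ring
  rw [hshift]
  refine X_pow_sub_C_irreducible_of_prime hp fun b hb => hgc (Algebra.norm K (-b)) ?_
  calc Algebra.norm K (-b) ^ p
        = Algebra.norm K (algebraMap K K⟮x⟯ c - AdjoinSimple.gen K x) := by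
        rw [← map_pow, hodd.neg_pow, hb, neg_sub]
    _ = g.eval c := by
        rw [← hx, ← minpoly_gen, ← adjoin.powerBasis_gen hx_int,
          PowerBasis.norm_algebraMap_sub_gen]

theorem IsIntegrallyClosed.pow_ne_algebraMap {R K : Type*} [CommRing R] [IsDomain R]
    [IsIntegrallyClosed R] [Field K] [Algebra R K] [IsFractionRing R K] {n : ℕ} (hn : n ≠ 0)
    {a : R} (ha : ∀ m : R, m ^ n ≠ a) (q : K) : q ^ n ≠ algebraMap R K a := by
  intro hq
  have hq_int : IsIntegral R q :=
    ⟨X ^ n - C a, monic_X_pow_sub_C a hn, by simp [eval₂_sub, hq]⟩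
  obtain ⟨m, rfl⟩ := IsIntegrallyClosed.isIntegral_iff.mp hq_int
  exact ha m (IsFractionRing.injective R K (by rwa [map_pow]))

theorem pow_ne_algebraMap_of_not_dvd_finrank {F L : Type*} [Field F] [Field L] [Algebra F L]
    [FiniteDimensional F L] {p : ℕ} (hp : p.Prime) (hpL : ¬ p ∣ Module.finrank F L) {a : F}
    (ha : ∀ b : F, b ^ p ≠ a) (b : L) : b ^ p ≠ algebraMap F L a := by
  intro hb
  have hmin : minpoly F b = X ^ p - C a :=
    (minpoly.eq_of_irreducible_of_monic (X_pow_sub_C_irreducible_of_prime hp ha)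
      (by simp [hb]) (monic_X_pow_sub_C a hp.ne_zero)).symm
  have := minpoly.degree_dvd (IsIntegral.of_finite F b)
  rw [hmin, natDegree_X_pow_sub_C] at this
  exact hpL this

theorem CyclotomicField.pow_ne_intCast {p : ℕ} [NeZero p] (hp : p.Prime) {a : ℤ}
    (ha : ∀ m : ℤ, m ^ p ≠ a) (b : CyclotomicField p ℚ) : b ^ p ≠ a := by
  have hrank : Module.finrank ℚ (CyclotomicField p ℚ) = p - 1 := by
    -- The ascription matters: the inferred type of this instance is not the one searched for.
    have : IsCyclotomicExtension {p} ℚ (CyclotomicField p ℚ) :=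
      CyclotomicField.isCyclotomicExtension p ℚ
    rw [← Nat.totient_prime hp]
    exact IsCyclotomicExtension.finrank _ (cyclotomic.irreducible_rat hp.pos)
  have hp_ndvd : ¬ p ∣ Module.finrank ℚ (CyclotomicField p ℚ) := by
    rw [hrank]
    exact Nat.not_dvd_of_pos_of_lt (Nat.sub_pos_of_lt hp.one_lt) (Nat.sub_lt hp.pos one_pos)
  simpa using pow_ne_algebraMap_of_not_dvd_finrank hp hp_ndvd
    (IsIntegrallyClosed.pow_ne_algebraMap hp.ne_zero ha) b

theorem pow_add_lt_add_one_pow {R : Type*} [CommSemiring R] [LinearOrder R] [IsStrictOrderedRing R]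
    {a : R} (ha : 1 ≤ a) {n : ℕ} (hn : 1 < n) : a ^ n + a < (a + 1) ^ n := by
  obtain ⟨k, rfl⟩ : ∃ k, n = k + 2 := ⟨n - 2, by omega⟩
  have ha₀ : 0 ≤ a := zero_le_one.trans ha
  calc a ^ (k + 2) + a < a ^ (k + 2) + a + (a ^ (k + 1) + 1) :=
        lt_add_of_pos_right _ (by positivity)
    _ = (a + 1) * (a ^ (k + 1) + 1) := by ring
    _ ≤ (a + 1) * (a + 1) ^ (k + 1) := by
        gcongr
        simpa using pow_add_pow_le ha₀ zero_le_one k.succ_ne_zero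
    _ = (a + 1) ^ (k + 2) := by ring

theorem Int.pow_ne_pow_add_of_le {p : ℕ} (hp : 1 < p) {a c : ℤ} (hc : 0 < c) (hca : c ≤ a)
    (m : ℤ) : m ^ p ≠ a ^ p + c := by
  intro hm
  have ha : 0 ≤ a := hc.le.trans hca
  have hm_abs : |m| ^ p = a ^ p + c := by
    rw [← abs_pow, hm, abs_of_pos (by positivity)]
  have hlt : a < |m| := lt_of_pow_lt_pow_left₀ p (abs_nonneg m) (by linarith)
  have : (a + 1) ^ p ≤ |m| ^ p := pow_le_pow_left₀ (by omega) (by omega) p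
  have := pow_add_lt_add_one_pow (show 1 ≤ a by omega) hp
  linarith

theorem le_iterate_pow_add {R : Type*} [CommSemiring R] [PartialOrder R] [IsOrderedRing R]
    {c : R} (hc : 0 ≤ c) (p n : ℕ) : c ≤ (fun z => z ^ p + c)^[n] c := by
  induction n with
  | zero => rfl
  | succ n ih =>
    rw [Function.iterate_succ_apply']
    exact le_add_of_nonneg_left (pow_nonneg (hc.trans ih) p)

theorem Int.iterate_pow_add_ne_pow {p : ℕ} (hp : 1 < p) {c : ℤ} (hc : 0 < c)
    (hcp : ∀ m : ℤ, m ^ p ≠ c) (n : ℕ) (m : ℤ) :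
    m ^ p ≠ (fun z => z ^ p + c)^[n] c := by
  cases n with
  | zero => exact hcp m
  | succ n =>
    rw [Function.iterate_succ_apply']
    exact Int.pow_ne_pow_add_of_le hp hc (le_iterate_pow_add hc.le p n) m

theorem iteratePoly_succ (K : Type*) [Field K] (d : ℕ) (c : K) (n : ℕ) :
    iteratePoly K d c (n + 1) = (iteratePoly K d c n).comp (X ^ d + C c) :=
  Function.iterate_succ_apply' _ n X

theorem iteratePoly_monic {K : Type*} [Field K] {d : ℕ} (hd : d ≠ 0) (c : K) (n : ℕ) :
    (iteratePoly K d c n).Monic := by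
  induction n with
  | zero => exact monic_X
  | succ n ih =>
    rw [iteratePoly_succ]
    exact ih.comp (monic_X_pow_add_C c hd) (by rwa [natDegree_X_pow_add_C])

theorem eval_iteratePoly {K : Type*} [Field K] (d : ℕ) (c z : K) (n : ℕ) :
    (iteratePoly K d c n).eval z = (fun z => z ^ d + c)^[n] z := by
  induction n generalizing z with
  | zero => simp [iteratePoly]
  | succ n ih => simp [iteratePoly_succ, ih, Function.iterate_succ_apply]

theorem Int.cast_iterate_pow_add {K : Type*} [Ring K] (p : ℕ) (c z : ℤ) (n : ℕ) :
    (((fun z => z ^ p + c)^[n] z : ℤ) : K) = (fun z => z ^ p + (c : K))^[n] z :=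
  (Function.Semiconj.iterate_right (fun z => by push_cast; rfl) n) z

theorem iterates_irreducible_over_cyclotomic_general
    (p : ℕ) (hp : p.Prime) (hodd : Odd p) (c : ℤ) (hc : 0 < c)
    (hcp : ¬ ∃ m : ℤ, c = m ^ p) (n : ℕ) :
    Irreducible (iteratePoly ((haveI : NeZero p := ⟨hp.ne_zero⟩; CyclotomicField p ℚ)) p (c : (haveI : NeZero p := ⟨hp.ne_zero⟩; CyclotomicField p ℚ)) n) := by
  have : NeZero p := ⟨hp.ne_zero⟩
  -- `(fun z => z ^ p + c)^[n] c` is `f^(n+1)(0)`.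
  have hc_orbit := Int.iterate_pow_add_ne_pow hp.one_lt hc fun m hm => hcp ⟨m, hm.symm⟩
  induction n with
  | zero => exact irreducible_X
  | succ n ih =>
    rw [iteratePoly_succ]
    refine irreducible_comp_X_pow_add_C hp hodd (iteratePoly_monic hp.ne_zero _ n) ih _ fun b => ?_
    rw [eval_iteratePoly, ← Int.cast_iterate_pow_add]
    exact CyclotomicField.pow_ne_intCast hp (hc_orbit n) b

theorem iterates_irreducible_over_cyclotomic
    (p : ℕ) (hp : p.Prime) (hodd : Odd p) (c : ℤ) (hc : 0 < c)
    (hcp : ¬ ∃ m : ℤ, c = m ^ p) (n : ℕ) (hn : 1 ≤ n) :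
    Irreducible (iteratePoly ((haveI : NeZero p := ⟨hp.ne_zero⟩; CyclotomicField p ℚ)) p (c : (haveI : NeZero p := ⟨hp.ne_zero⟩; CyclotomicField p ℚ)) n) :=
  iterates_irreducible_over_cyclotomic_general p hp hodd c hc hcp n
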